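/- arXiv:1702.05807 — 3 statements merged into one kernel-verified Lean document; each statement's English description precedes it below -/
import Mathlib

section
/- Soundness of flow-insensitive points-to analysis for copy and allocation statements: if pt is any solution of the Andersen constraints for program P, then in every execution trace of P (an arbitrary interleaving of P's statements applied to a store), the concrete value held by each variable x is an allocation site in pt(x) or the initial undefined value. -/
/-- Statements of the abstract language: allocation `x := new_i()` (where
`l` is the allocation site of the `new`) and copy `x := y`. -/
inductive PtStmt (Var Loc : Type) : Type
  | new (x : Var) (l : Loc)
  | copy (x y : Var)

/-- Executing one statement on a store. -/
def ptStep {Var Loc : Type} [DecidableEq Var]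
    (σ : Var → Option Loc) : PtStmt Var Loc → (Var → Option Loc)
  | .new x l => Function.update σ x (some l)
  | .copy x y => Function.update σ x (σ y)

def PtStmt.AndersenConstraint {Var Loc : Type} (pt : Var → Set Loc) : PtStmt Var Loc → Prop
  | .new x l => l ∈ pt x
  | .copy x y => pt y ⊆ pt x

def StoreSound {Var Loc : Type} (pt : Var → Set Loc) (σ : Var → Option Loc) : Prop :=
  ∀ x l, σ x = some l → l ∈ pt x

section

variable {Var Loc : Type} {pt : Var → Set Loc}

theorem storeSound_none : StoreSound pt (fun _ => (none : Option Loc)) :=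
  fun _ _ h => nomatch h

variable [DecidableEq Var]

theorem StoreSound.step {σ : Var → Option Loc} {st : PtStmt Var Loc} (hσ : StoreSound pt σ)
    (hst : st.AndersenConstraint pt) : StoreSound pt (ptStep σ st) := by
  intro x l hx
  cases st with
  | new y l' =>
    rcases eq_or_ne x y with rfl | hne
    · obtain rfl : l' = l := by simpa [ptStep] using hx
      exact hst
    · exact hσ x l (by simpa [ptStep, hne] using hx)
  | copy y z =>
    rcases eq_or_ne x y with rfl | hne
    · exact hst (hσ z l (by simpa [ptStep] using hx))
    · exact hσ x l (by simpa [ptStep, hne] using hx)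

theorem StoreSound.foldl_step {σ : Var → Option Loc} (hσ : StoreSound pt σ)
    {tr : List (PtStmt Var Loc)} (htr : ∀ st ∈ tr, st.AndersenConstraint pt) :
    StoreSound pt (tr.foldl ptStep σ) := by
  induction tr generalizing σ with
  | nil => exact hσ
  | cons st tr ih =>
    exact ih (hσ.step (htr st List.mem_cons_self))
      fun st' hst' => htr st' (List.mem_cons_of_mem _ hst')

end

/-- Soundness of flow-insensitive points-to analysis for copy and allocation
statements: if `pt` satisfies the Andersen constraints for program `P`, then
after any execution trace (interleaving of statements of `P` starting from the
all-undefined store), every variable holding a concrete value `l` has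
`l ∈ pt x`. -/
theorem andersen_soundness {Var Loc : Type} [DecidableEq Var]
    (P : Set (PtStmt Var Loc)) (pt : Var → Set Loc)
    (hnew : ∀ (x : Var) (l : Loc), PtStmt.new x l ∈ P → l ∈ pt x)
    (hcopy : ∀ x y : Var, PtStmt.copy x y ∈ P → pt y ⊆ pt x) :
    ∀ tr : List (PtStmt Var Loc), (∀ st ∈ tr, st ∈ P) →
      ∀ (x : Var) (l : Loc),
        (tr.foldl ptStep (fun _ => (none : Option Loc))) x = some l → l ∈ pt x := by
  have hP : ∀ st ∈ P, st.AndersenConstraint pt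
    | .new x l, h => hnew x l h
    | .copy x y, h => hcopy x y h
  intro tr htr
  exact storeSound_none.foldl_step fun st hst => hP st (htr st hst)
end

section
/- Hash-consing soundness for value numbering of variables: define a term-assignment h : Var → Term built by processing a straight-line sequence of copy statements 'y := x' in order, where processing 'y := x' sets h(y) := h(x) (assigning fresh terms to variables on first use). Then for any two variables u, w, if h(u) = h(w) after processing the sequence, then u and w hold equal values in the final store of any execution of the sequence from any initial store consistent with h's fresh-term assignment (i.e., variables with equal initial terms have equal initial values). -/
/-- Processing a straight-line sequence of copy statements `y := x`
(represented as pairs `(y, x)`) on a term assignment: `h(y) := h(x)`. -/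
def runTerms {Var Term : Type} [DecidableEq Var]
    (prog : List (Var × Var)) (h : Var → Term) : Var → Term :=
  prog.foldl (fun h p => Function.update h p.1 (h p.2)) h

/-- Executing a straight-line sequence of copy statements on a store:
`σ(y) := σ(x)`. -/
def runStore {Var Val : Type} [DecidableEq Var]
    (prog : List (Var × Var)) (σ : Var → Val) : Var → Val :=
  prog.foldl (fun σ p => Function.update σ p.1 (σ p.2)) σ

theorem vn_aux {Var Term Val : Type} [DecidableEq Var]
    (prog : List (Var × Var)) : ∀ (h₀ : Var → Term) (σ₀ : Var → Val),
    (∀ u w : Var, h₀ u = h₀ w → σ₀ u = σ₀ w) →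
    ∀ u w : Var, runTerms prog h₀ u = runTerms prog h₀ w →
      runStore prog σ₀ u = runStore prog σ₀ w := by
  induction prog with
  | nil => intro h σ hi u w he; exact hi u w he
  | cons p rest ih =>
    intro h σ hi u w he
    refine ih _ _ ?_ u w he
    intro a b hab
    by_cases ha : a = p.1 <;> by_cases hb : b = p.1 <;>
      simp [Function.update, ha, hb] at hab ⊢ <;> exact hi _ _ hab

/-- Hash-consing soundness for value numbering of copies: if the initial term
assignment is injective (fresh terms) and variables with equal initial terms
have equal initial values, then variables receiving equal terms after
processing the sequence hold equal values in the final store. -/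
theorem value_numbering_copies_sound {Var Term Val : Type} [DecidableEq Var]
    (prog : List (Var × Var)) (h₀ : Var → Term) (σ₀ : Var → Val)
    (hfresh : Function.Injective h₀)
    (hinit : ∀ u w : Var, h₀ u = h₀ w → σ₀ u = σ₀ w) :
    ∀ u w : Var, runTerms prog h₀ u = runTerms prog h₀ w →
      runStore prog σ₀ u = runStore prog σ₀ w := by
  exact vn_aux prog h₀ σ₀ hinit
end

section
/- Equal terms under the nonNullExprs discipline imply non-nullness: in the GVN-transformed program, if at location L an expression e satisfies ComputeHash(e) ∈ nonNullExprs[L], then in every execution reaching L, e evaluates to a non-Null value. -/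
/-- Equal terms under the `nonNullExprs` discipline imply non-nullness: fix a
location `L`; `Exec` is the type of executions reaching `L`, and `eval ex e`
is the value of expression `e` at `L` in execution `ex`.  Assume (1) term
soundness: expressions with the same term evaluate to equal values in every
execution; (2)+(3) for every term `t ∈ nonNullExprs[L]` there is a #-tagged
variable `v` (viewed as an expression `varE v`) with term `t` that is defined
at `L` and non-Null in every execution reaching `L`.  Then every expression
whose term lies in `nonNullExprs[L]` evaluates to a non-Null value in every
execution reaching `L`. -/
theorem nonnull_of_term_in_nonNullExprs {Var Expr Term Exec Val : Type}
    (hash : Expr → Term) (nonNullExprsL : Set Term)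
    (eval : Exec → Expr → Val) (null : Val)
    (varE : Var → Expr)
    (hterm : ∀ (ex : Exec) (e₁ e₂ : Expr), hash e₁ = hash e₂ →
      eval ex e₁ = eval ex e₂)
    (hwitness : ∀ t ∈ nonNullExprsL, ∃ v : Var,
      hash (varE v) = t ∧ ∀ ex : Exec, eval ex (varE v) ≠ null)
    (e : Expr) (hmem : hash e ∈ nonNullExprsL) :
    ∀ ex : Exec, eval ex e ≠ null := by
  intro ex
  obtain ⟨v, hv, hnn⟩ := hwitness _ hmem
  rw [hterm ex e (varE v) hv.symm]
  exact hnn ex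
end
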